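/- Let h_b and h_e be independent, each exponentially distributed with rate 1 (the symmetric Rayleigh scenario with equal unit average SNRs), and let P > 0, R₀ ≥ 0. Then the secrecy-rate objective of Theorem 1 evaluates to Pr(R₀ ≤ log₂(1 + h_b P)) · 𝔼[(R₀ − log₂(1 + h_e P))⁺] = exp(−(2^{R₀} − 1)/P) · { R₀ − (e^{1/P}/ln 2)·( E₁(1/P) − E₁(2^{R₀}/P) ) }. -/

import Mathlib

/-! Since `log₂(1 + h P)` is increasing in `h > 0`, the event `R₀ ≤ log₂(1 + h_b P)` is
`h_b ≥ (2^R₀ - 1)/P`, of probability `e^{-(2^R₀ - 1)/P}`. For the expectation, the layer-cake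
formula gives `∫₀^R₀ Pr(h_e < (2^(R₀-t) - 1)/P) dt = ∫₀^R₀ (1 - e^{-(2^u - 1)/P}) du`, and
the substitution `s = 2^u / P` turns `∫₀^R₀ e^{-2^u/P} du` into
`(1 / ln 2) ∫_{1/P}^{2^R₀/P} e^{-s}/s ds = (E₁(1/P) - E₁(2^R₀/P)) / ln 2`. -/

open MeasureTheory ProbabilityTheory Real Set Filter Topology

def HasExpTail {Ω : Type*} [MeasurableSpace Ω] (μ : Measure Ω) (r : ℝ) (X : Ω → ℝ) :
    Prop :=
  ∀ x : ℝ, 0 ≤ x → μ {ω | X ω > x} = ENNReal.ofReal (exp (-(r * x)))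

theorem le_logb_one_add_mul_iff {b P x R : ℝ} (hb : 1 < b) (hP : 0 < P) (hx : 0 < 1 + x * P) :
    R ≤ logb b (1 + x * P) ↔ (b ^ R - 1) / P ≤ x := by
  rw [le_logb_iff_rpow_le hb hx, div_le_iff₀ hP]
  constructor <;> intro h <;> linarith

theorem rpow_sub_one_div_nonneg {b P R : ℝ} (hb : 1 ≤ b) (hP : 0 < P) (hR : 0 ≤ R) :
    0 ≤ (b ^ R - 1) / P :=
  div_nonneg (sub_nonneg.2 (one_le_rpow hb hR)) hP.le

namespace HasExpTail

variable {Ω : Type*} [MeasurableSpace Ω] {μ : Measure Ω} [IsProbabilityMeasure μ]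
  {r : ℝ} {X : Ω → ℝ}

theorem ae_pos (hX : HasExpTail μ r X) (hXm : Measurable X) : ∀ᵐ ω ∂μ, 0 < X ω :=
  (ae_iff_measure_eq (measurableSet_lt measurable_const hXm).nullMeasurableSet).2 <| by
    simpa using hX 0 le_rfl

theorem measure_ge (hX : HasExpTail μ r X) {c : ℝ} (hc : 0 ≤ c) :
    μ {ω | c ≤ X ω} = ENNReal.ofReal (exp (-(r * c))) := by
  refine le_antisymm ?_ (hX c hc ▸ measure_mono fun _ hω => mem_ofPred.2 (le_of_lt hω))
  rcases hc.eq_or_lt with rfl | hc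
  · simpa using prob_le_one
  -- the closed tail is squeezed by the open tails `{x < X}` as `x ↑ c`
  have htend : Tendsto (fun x => ENNReal.ofReal (exp (-(r * x)))) (𝓝[<] c)
      (𝓝 (ENNReal.ofReal (exp (-(r * c))))) :=
    ((ENNReal.continuous_ofReal.comp (by fun_prop)).tendsto c).mono_left nhdsWithin_le_nhds
  refine ge_of_tendsto htend ?_
  filter_upwards [Ioo_mem_nhdsLT hc] with x hx
  exact hX x hx.1.le ▸ measure_mono fun ω hω => hx.2.trans_le hω

theorem measureReal_lt (hX : HasExpTail μ r X) (hXm : Measurable X) {c : ℝ} (hc : 0 ≤ c) :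
    μ.real {ω | X ω < c} = 1 - exp (-(r * c)) := by
  have hcompl : {ω | X ω < c} = {ω | c ≤ X ω}ᶜ := by ext; simp
  rw [hcompl, probReal_compl_eq_one_sub (measurableSet_le measurable_const hXm), measureReal_def,
    hX.measure_ge hc, ENNReal.toReal_ofReal (exp_nonneg _)]

theorem measureReal_lt_of_nonpos (hX : HasExpTail μ r X) (hXm : Measurable X) {c : ℝ}
    (hc : c ≤ 0) : μ.real {ω | X ω < c} = 0 := by
  rw [measureReal_eq_zero_iff]
  refine measure_mono_null (fun ω hω => ?_) (ae_iff.1 (hX.ae_pos hXm))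
  exact not_lt.2 ((le_of_lt hω).trans hc)

theorem measureReal_le_logb (hX : HasExpTail μ r X) (hXm : Measurable X) {P R : ℝ}
    (hP : 0 < P) (hR : 0 ≤ R) :
    μ.real {ω | R ≤ logb 2 (1 + X ω * P)} = exp (-(r * ((2 ^ R - 1) / P))) := by
  have hae : {ω | R ≤ logb 2 (1 + X ω * P)} =ᵐ[μ] {ω | (2 ^ R - 1) / P ≤ X ω} := by
    filter_upwards [hX.ae_pos hXm] with ω hω
    exact propext (le_logb_one_add_mul_iff one_lt_two hP (by positivity))
  rw [measureReal_congr hae, measureReal_def,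
    hX.measure_ge (rpow_sub_one_div_nonneg one_le_two hP hR), ENNReal.toReal_ofReal (exp_nonneg _)]

theorem integrable_max_sub_logb (hX : HasExpTail μ r X) (hXm : Measurable X) {P R : ℝ}
    (hP : 0 < P) (hR : 0 ≤ R) :
    Integrable (fun ω => max (R - logb 2 (1 + X ω * P)) 0) μ := by
  have hlogb : Measurable fun ω => logb 2 (1 + X ω * P) :=
    (measurable_log.comp (by fun_prop)).div_const _
  refine .of_bound ((measurable_const.sub hlogb).max measurable_const).aestronglyMeasurable R ?_
  filter_upwards [hX.ae_pos hXm] with ω hω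
  have hlogb_nonneg : 0 ≤ logb 2 (1 + X ω * P) := logb_nonneg one_lt_two (by nlinarith)
  rw [norm_of_nonneg (le_max_right _ _)]
  exact max_le (by linarith) hR

theorem integral_max_sub_logb (hX : HasExpTail μ r X) (hXm : Measurable X) {P R : ℝ}
    (hP : 0 < P) (hR : 0 ≤ R) :
    ∫ ω, max (R - logb 2 (1 + X ω * P)) 0 ∂μ
      = ∫ t in Ioc 0 R, (1 - exp (-(r * ((2 ^ (R - t) - 1) / P)))) := by
  have hlevel : ∀ t ∈ Ioi (0 : ℝ), μ.real {ω | t < max (R - logb 2 (1 + X ω * P)) 0}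
      = μ.real {ω | X ω < (2 ^ (R - t) - 1) / P} := by
    intro t (ht : 0 < t)
    refine measureReal_congr (eventuallyEq_set.2 ?_)
    filter_upwards [hX.ae_pos hXm] with ω hω
    simp only [lt_max_iff, ht.not_gt, or_false]
    rw [lt_sub_comm, ← not_le, le_logb_one_add_mul_iff one_lt_two hP (by positivity), not_le]
  rw [(hX.integrable_max_sub_logb hXm hP hR).integral_eq_integral_meas_lt
      (.of_forall fun _ => le_max_right _ _),
    setIntegral_congr_fun measurableSet_Ioi hlevel,
    setIntegral_eq_of_subset_of_forall_sdiff_eq_zero measurableSet_Ioi Ioc_subset_Ioi_self]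
  · refine setIntegral_congr_fun measurableSet_Ioc fun t ht => ?_
    exact hX.measureReal_lt hXm (rpow_sub_one_div_nonneg one_le_two hP (sub_nonneg.2 ht.2))
  · rintro t ⟨ht, htR⟩
    refine hX.measureReal_lt_of_nonpos hXm (div_nonpos_of_nonpos_of_nonneg ?_ hP.le)
    have hRt : R - t < 0 := sub_neg.2 (lt_of_not_ge fun h => htR ⟨ht, h⟩)
    linarith [rpow_lt_one_of_one_lt_of_neg one_lt_two hRt]

end HasExpTail

noncomputable def expIntegralE1 (x : ℝ) : ℝ := ∫ s in Ioi x, exp (-s) / s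

theorem integrableOn_exp_neg_div_Ioi {a : ℝ} (ha : 0 < a) :
    IntegrableOn (fun s => exp (-s) / s) (Ioi a) := by
  refine ((exp_neg_integrableOn_Ioi a one_pos).div_const a).mono'
    (measurable_neg.exp.div measurable_id).aestronglyMeasurable ?_
  filter_upwards [ae_restrict_mem measurableSet_Ioi] with s (hs : a < s)
  rw [norm_of_nonneg (div_nonneg (exp_nonneg _) (ha.trans hs).le), neg_one_mul]
  exact div_le_div_of_nonneg_left (exp_nonneg _) ha hs.le

theorem intervalIntegral_exp_neg_div {a b : ℝ} (ha : 0 < a) (hab : a ≤ b) :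
    ∫ s in a..b, exp (-s) / s = expIntegralE1 a - expIntegralE1 b :=
  (intervalIntegral.integral_Ioi_sub_Ioi (integrableOn_exp_neg_div_Ioi ha) hab).symm

theorem intervalIntegral_exp_neg_rpow_div {b P R : ℝ} (hb : 1 < b) (hP : 0 < P) :
    ∫ u in 0..R, exp (-(b ^ u / P)) = (log b)⁻¹ * ∫ s in 1 / P..b ^ R / P, exp (-s) / s := by
  have hb0 : 0 < b := one_pos.trans hb
  have hlog : log b ≠ 0 := (log_pos hb).ne'
  have hderiv : ∀ u ∈ uIcc 0 R, HasDerivAt (fun u => b ^ u / P) (b ^ u * log b / P) u :=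
    fun u _ => (hasStrictDerivAt_const_rpow hb0 u).hasDerivAt.div_const P
  have hcont : ContinuousOn (fun s : ℝ => exp (-s) / s) ((fun u => b ^ u / P) '' uIcc 0 R) := by
    rintro _ ⟨u, -, rfl⟩
    exact (continuousAt_id.neg.rexp.div continuousAt_id
      (div_pos (rpow_pos_of_pos hb0 u) hP).ne').continuousWithinAt
  have hsubst := intervalIntegral.integral_comp_mul_deriv' hderiv
    (by fun_prop (disch := positivity)) hcont
  rw [eq_inv_mul_iff_mul_eq₀ hlog, ← intervalIntegral.integral_const_mul]
  simp only [rpow_zero, Function.comp_apply] at hsubst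
  rw [← hsubst]
  refine intervalIntegral.integral_congr fun u _ => ?_
  have : 0 < b ^ u := rpow_pos_of_pos hb0 u
  field_simp

theorem setIntegral_one_sub_exp_neg_rpow_sub {P R : ℝ} (hP : 0 < P) (hR : 0 ≤ R) :
    ∫ t in Ioc 0 R, (1 - exp (-((2 ^ (R - t) - 1) / P)))
      = R - exp (1 / P) / log 2 * (expIntegralE1 (1 / P) - expIntegralE1 (2 ^ R / P)) := by
  have hsplit : ∀ t : ℝ,
      exp (-((2 ^ (R - t) - 1) / P)) = exp (1 / P) * exp (-(2 ^ (R - t) / P)) := by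
    intro t
    rw [← exp_add]
    ring_nf
  have h1P : 1 / P ≤ 2 ^ R / P := by gcongr; exact one_le_rpow one_le_two hR
  calc ∫ t in Ioc 0 R, (1 - exp (-((2 ^ (R - t) - 1) / P)))
      = ∫ t in (0)..R, (1 - exp (1 / P) * exp (-(2 ^ (R - t) / P))) := by
        simp only [hsplit, intervalIntegral.integral_of_le hR]
    _ = R - exp (1 / P) * ∫ u in (0)..R, exp (-(2 ^ u / P)) := by
        rw [intervalIntegral.integral_sub intervalIntegrable_const
            ((Continuous.intervalIntegrable (by fun_prop (disch := norm_num)) _ _).const_mul _),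
          intervalIntegral.integral_const_mul, intervalIntegral.integral_comp_sub_left
            (fun u => exp (-(2 ^ u / P)))]
        simp
    _ = _ := by
        rw [intervalIntegral_exp_neg_rpow_div one_lt_two hP,
          intervalIntegral_exp_neg_div (by positivity) h1P]
        ring

theorem stmt_8_general {Ω : Type*} [MeasureSpace Ω] [IsProbabilityMeasure (ℙ : Measure Ω)]
    (hb he : Ω → ℝ) (hbmeas : Measurable hb) (hemeas : Measurable he)
    (hbexp : ∀ x : ℝ, 0 ≤ x → ℙ {ω | hb ω > x} = ENNReal.ofReal (Real.exp (-x)))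
    (heexp : ∀ x : ℝ, 0 ≤ x → ℙ {ω | he ω > x} = ENNReal.ofReal (Real.exp (-x)))
    (P R₀ : ℝ) (hP : 0 < P) (hR₀ : 0 ≤ R₀) :
    (ℙ {ω | R₀ ≤ Real.logb 2 (1 + hb ω * P)}).toReal
        * ∫ ω, max (R₀ - Real.logb 2 (1 + he ω * P)) 0 ∂ℙ
      = Real.exp (-(((2 : ℝ) ^ R₀ - 1) / P)) *
          (R₀ - (Real.exp (1 / P) / Real.log 2) *
            ((∫ s in Set.Ioi (1 / P), Real.exp (-s) / s)
              - ∫ s in Set.Ioi ((2 : ℝ) ^ R₀ / P), Real.exp (-s) / s)) := by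
  have hb1 : HasExpTail ℙ 1 hb := by simpa [HasExpTail] using hbexp
  have he1 : HasExpTail ℙ 1 he := by simpa [HasExpTail] using heexp
  rw [← measureReal_def, hb1.measureReal_le_logb hbmeas hP hR₀,
    he1.integral_max_sub_logb hemeas hP hR₀]
  simp only [one_mul]
  rw [setIntegral_one_sub_exp_neg_rpow_sub hP hR₀]
  rfl

/-- In the symmetric Rayleigh scenario (independent unit-rate exponential fading
gains `h_b`, `h_e`), with `P > 0` and `R₀ ≥ 0`, the secrecy-rate objective of Theorem 1
evaluates to
`Pr(R₀ ≤ log₂(1 + h_b P)) · 𝔼[(R₀ - log₂(1 + h_e P))⁺]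
  = exp (-(2^{R₀}-1)/P) · (R₀ - (e^{1/P}/ln 2)(E₁(1/P) - E₁(2^{R₀}/P)))`. -/
theorem stmt_8 {Ω : Type*} [MeasureSpace Ω] [IsProbabilityMeasure (ℙ : Measure Ω)]
    (hb he : Ω → ℝ) (hbmeas : Measurable hb) (hemeas : Measurable he)
    (hindep : IndepFun hb he ℙ)
    (hbexp : ∀ x : ℝ, 0 ≤ x → ℙ {ω | hb ω > x} = ENNReal.ofReal (Real.exp (-x)))
    (heexp : ∀ x : ℝ, 0 ≤ x → ℙ {ω | he ω > x} = ENNReal.ofReal (Real.exp (-x)))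
    (P R₀ : ℝ) (hP : 0 < P) (hR₀ : 0 ≤ R₀) :
    (ℙ {ω | R₀ ≤ Real.logb 2 (1 + hb ω * P)}).toReal
        * ∫ ω, max (R₀ - Real.logb 2 (1 + he ω * P)) 0 ∂ℙ
      = Real.exp (-(((2 : ℝ) ^ R₀ - 1) / P)) *
          (R₀ - (Real.exp (1 / P) / Real.log 2) *
            ((∫ s in Set.Ioi (1 / P), Real.exp (-s) / s)
              - ∫ s in Set.Ioi ((2 : ℝ) ^ R₀ / P), Real.exp (-s) / s)) :=
  stmt_8_general hb he hbmeas hemeas hbexp heexp P R₀ hP hR₀
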